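/- arXiv:0706.3620 — 4 statements merged into one kernel-verified Lean document; each statement's English description precedes it below -/
import Mathlib

section
/- Suppose x ∈ 𝒟 satisfies p_n(x) ≥ 0 for all n ∈ ℕ₀ (i.e. α_x is a positive character) and there exists exactly one α_x-mean on ℓ∞(ℕ₀). Then p_n(x) = 1 for all n ∈ ℕ₀, i.e. α_x is the constant character 1. -/
open Filter Topology MeasureTheory

noncomputable section

/-- `m` is an `α`-mean on `ℓ∞(ℕ₀)` for the polynomial hypergroup with
linearization coefficients `g`: `m(α) = 1` and `m(T_n f) = α(n) · m(f)` for all `n`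
and all bounded `f`, where `(T_n f)(k) = Σ_{j≤n+k} g(n,k,j) f(j)`. -/
def IsAlphaMean (g : ℕ → ℕ → ℕ → ℝ) (α : BoundedContinuousFunction ℕ ℝ)
    (m : BoundedContinuousFunction ℕ ℝ →L[ℝ] ℝ) : Prop :=
  m α = 1 ∧
    ∀ (n : ℕ) (f Tf : BoundedContinuousFunction ℕ ℝ),
      (∀ k : ℕ, Tf k = ∑ j ∈ Finset.range (n + k + 1), g n k j * f j) →
      m Tf = α n * m f

/-- The support of a measure on `ℝ`: the points all of whose open
neighbourhoods have positive measure. -/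
def measSupport (μ : Measure ℝ) : Set ℝ :=
  {y : ℝ | ∀ U : Set ℝ, IsOpen U → y ∈ U → 0 < μ U}

/-!
Write `s n = p n x`. Since `a n + b n + c n = 1`, the recurrence at `x` reads
`a n (s (n+1) - s n) = (s 1 - 1) s n + c n (s n - s (n-1))`, so `s` is monotone in the direction
of the sign of `s 1 - 1`. Because `s 1 * s n = ∑ j, g 1 n j * s j` is a convex combination of
`s 0, …, s (n+1)`, monotonicity upgrades to `s 1 ^ n ≤ s n`, resp. `s n ≤ s 1 ^ n`.
If `s 1 > 1` this contradicts boundedness of `αx`. If `s 1 < 1`, then `αx ∈ c₀`. Orthogonality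
gives `g n k 0 = ∫ p n p k dμ`, i.e. `T n δ₀ = g n n 0 • δₙ`, so an `αx`-mean `m` satisfies
`g n n 0 * m δₙ = s n * m δ₀`; as `0 < g n n 0 ≤ s n ^ 2` and `m` is bounded, `m δ₀ = 0`, hence
`m` kills every `δₙ` and therefore all of `c₀`, contradicting `m αx = 1`.
-/

def natDelta (j : ℕ) : BoundedContinuousFunction ℕ ℝ :=
  BoundedContinuousFunction.indicator {j} (isClopen_discrete _)

theorem natDelta_apply (j k : ℕ) : natDelta j k = if k = j then 1 else 0 := by
  simp [natDelta, Set.indicator]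

theorem norm_natDelta_le (j : ℕ) : ‖natDelta j‖ ≤ 1 :=
  (BoundedContinuousFunction.norm_le zero_le_one).2 fun k => by
    rw [natDelta_apply]; split_ifs <;> simp

theorem sum_smul_natDelta_apply (f : ℕ → ℝ) (N k : ℕ) :
    (∑ j ∈ Finset.range N, f j • natDelta j) k = if k < N then f k else 0 := by
  simp [BoundedContinuousFunction.coe_sum, natDelta_apply]

theorem tendsto_sum_smul_natDelta {f : BoundedContinuousFunction ℕ ℝ}
    (hf : Tendsto f atTop (𝓝 0)) :
    Tendsto (fun N => ∑ j ∈ Finset.range N, f j • natDelta j) atTop (𝓝 f) := by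
  rw [Metric.tendsto_atTop]
  intro ε hε
  obtain ⟨N₀, hN₀⟩ := Metric.tendsto_atTop.1 hf (ε / 2) (half_pos hε)
  refine ⟨N₀, fun N hN => ?_⟩
  rw [dist_eq_norm]
  refine lt_of_le_of_lt ((BoundedContinuousFunction.norm_le (half_pos hε).le).2 fun k => ?_)
    (half_lt_self hε)
  rw [BoundedContinuousFunction.coe_sub, Pi.sub_apply, sum_smul_natDelta_apply]
  split_ifs with hk
  · simpa using (half_pos hε).le
  · simpa [Real.dist_eq] using (hN₀ k (by omega)).le

theorem ContinuousLinearMap.map_eq_zero_of_map_natDelta_eq_zero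
    (m : BoundedContinuousFunction ℕ ℝ →L[ℝ] ℝ) (hm : ∀ j, m (natDelta j) = 0)
    {f : BoundedContinuousFunction ℕ ℝ} (hf : Tendsto f atTop (𝓝 0)) : m f = 0 := by
  refine tendsto_nhds_unique ((m.continuous.tendsto f).comp (tendsto_sum_smul_natDelta hf)) ?_
  simp [Function.comp_def, hm]

section Hypergroup

variable {g : ℕ → ℕ → ℕ → ℝ} {α : BoundedContinuousFunction ℕ ℝ}
  {m : BoundedContinuousFunction ℕ ℝ →L[ℝ] ℝ}

theorem IsAlphaMean.mul_apply_natDelta (hm : IsAlphaMean g α m)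
    (hg0 : ∀ n k, n ≠ k → g n k 0 = 0) (n : ℕ) :
    g n n 0 * m (natDelta n) = α n * m (natDelta 0) := by
  rw [← hm.2 n (natDelta 0) (g n n 0 • natDelta n) fun k => ?_, map_smul, smul_eq_mul]
  simp only [BoundedContinuousFunction.coe_smul, smul_eq_mul, natDelta_apply,
    mul_ite, mul_one, mul_zero, Finset.sum_ite_eq', Finset.mem_range, Nat.zero_lt_succ, if_true]
  split_ifs with hk
  · rw [hk]
  · exact (hg0 n k (Ne.symm hk)).symm

theorem not_isAlphaMean_of_tendsto_zero (hgnn : ∀ n k j, 0 ≤ g n k j)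
    (hg0 : ∀ n k, n ≠ k → g n k 0 = 0) (hg00 : ∀ n, 0 < g n n 0)
    (hmul : ∀ n k, α n * α k = ∑ j ∈ Finset.range (n + k + 1), g n k j * α j)
    (hα0 : α 0 = 1) (hαnn : ∀ n, 0 ≤ α n) (hα : Tendsto α atTop (𝓝 0)) :
    ¬ IsAlphaMean g α m := by
  intro hm
  have hg00_le : ∀ n, g n n 0 ≤ α n * α n := fun n => by
    rw [hmul]
    simpa [hα0] using Finset.single_le_sum (fun j _ => mul_nonneg (hgnn n n j) (hαnn j))
      (Finset.mem_range.2 (Nat.zero_lt_succ (n + n)))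
  have hαpos : ∀ n, 0 < α n := fun n =>
    (hαnn n).lt_of_ne fun h => by nlinarith [hg00_le n, hg00 n, h]
  have hbound : ∀ n, |m (natDelta 0)| ≤ ‖m‖ * α n := fun n => by
    have hmn : |m (natDelta n)| ≤ ‖m‖ := by
      simpa using m.le_opNorm_of_le (norm_natDelta_le n)
    refine le_of_mul_le_mul_right ?_ (hαpos n)
    calc |m (natDelta 0)| * α n = g n n 0 * |m (natDelta n)| := by
          rw [← abs_of_pos (hαpos n), ← abs_mul, mul_comm, ← hm.mul_apply_natDelta hg0,
            abs_mul, abs_of_pos (hg00 n)]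
      _ ≤ α n * α n * ‖m‖ := mul_le_mul (hg00_le n) hmn (abs_nonneg _) (mul_self_nonneg _)
      _ = ‖m‖ * α n * α n := by ring
  have hδ0 : m (natDelta 0) = 0 := abs_nonpos_iff.1 <| by
    simpa using ge_of_tendsto' (hα.const_mul ‖m‖) hbound
  have hδ : ∀ n, m (natDelta n) = 0 := fun n => by
    simpa [hδ0, (hg00 n).ne'] using hm.mul_apply_natDelta hg0 n
  simpa [hm.1] using m.map_eq_zero_of_map_natDelta_eq_zero hδ hα

end Hypergroup

section Recurrence

variable {a b c s : ℕ → ℝ}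

/-- Taking `ε = 1` or `ε = -1` gives the increasing and the decreasing case at once. -/
theorem mul_sub_nonneg_of_recurrence (ha : ∀ n, 1 ≤ n → 0 < a n)
    (hc : ∀ n, 1 ≤ n → 0 ≤ c n) (habc : ∀ n, 1 ≤ n → a n + b n + c n = 1)
    (hrec : ∀ n, 1 ≤ n → s 1 * s n = a n * s (n + 1) + b n * s n + c n * s (n - 1))
    (hs0 : s 0 = 1) (hs : ∀ n, 0 ≤ s n) {ε : ℝ} (hε : 0 ≤ ε * (s 1 - 1)) :
    ∀ n, 0 ≤ ε * (s (n + 1) - s n)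
  | 0 => by simpa [hs0] using hε
  | n + 1 => by
    have hn : 1 ≤ n + 1 := Nat.le_add_left 1 n
    have key : a (n + 1) * (ε * (s (n + 2) - s (n + 1)))
        = ε * (s 1 - 1) * s (n + 1) + c (n + 1) * (ε * (s (n + 1) - s n)) := by
      have hrec' := hrec (n + 1) hn
      rw [Nat.add_sub_cancel] at hrec'
      linear_combination (-ε) * hrec' - ε * s (n + 1) * habc (n + 1) hn
    refine (mul_nonneg_iff_of_pos_left (ha (n + 1) hn)).1 (key ▸ ?_)
    exact add_nonneg (mul_nonneg hε (hs _))
      (mul_nonneg (hc _ hn) (mul_sub_nonneg_of_recurrence ha hc habc hrec hs0 hs hε n))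

theorem monotone_of_three_term_recurrence (ha : ∀ n, 1 ≤ n → 0 < a n)
    (hc : ∀ n, 1 ≤ n → 0 ≤ c n) (habc : ∀ n, 1 ≤ n → a n + b n + c n = 1)
    (hrec : ∀ n, 1 ≤ n → s 1 * s n = a n * s (n + 1) + b n * s n + c n * s (n - 1))
    (hs0 : s 0 = 1) (hs : ∀ n, 0 ≤ s n) (hs1 : 1 ≤ s 1) : Monotone s :=
  monotone_nat_of_le_succ fun n => by
    linarith [mul_sub_nonneg_of_recurrence ha hc habc hrec hs0 hs (ε := 1) (by linarith) n]

theorem antitone_of_three_term_recurrence (ha : ∀ n, 1 ≤ n → 0 < a n)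
    (hc : ∀ n, 1 ≤ n → 0 ≤ c n) (habc : ∀ n, 1 ≤ n → a n + b n + c n = 1)
    (hrec : ∀ n, 1 ≤ n → s 1 * s n = a n * s (n + 1) + b n * s n + c n * s (n - 1))
    (hs0 : s 0 = 1) (hs : ∀ n, 0 ≤ s n) (hs1 : s 1 ≤ 1) : Antitone s :=
  antitone_nat_of_succ_le fun n => by
    linarith [mul_sub_nonneg_of_recurrence ha hc habc hrec hs0 hs (ε := -1) (by linarith) n]

theorem le_pow_of_mul_le {r : ℝ} (hr : 0 ≤ r) (hs0 : s 0 = 1) (h : ∀ n, r * s n ≤ s (n + 1)) :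
    ∀ n, r ^ n ≤ s n
  | 0 => by simp [hs0]
  | n + 1 => by
    rw [pow_succ']
    exact (mul_le_mul_of_nonneg_left (le_pow_of_mul_le hr hs0 h n) hr).trans (h n)

theorem pow_le_of_le_mul {r : ℝ} (hr : 0 ≤ r) (hs0 : s 0 = 1) (h : ∀ n, s (n + 1) ≤ r * s n) :
    ∀ n, s n ≤ r ^ n
  | 0 => by simp [hs0]
  | n + 1 => by
    rw [pow_succ']
    exact (h n).trans (mul_le_mul_of_nonneg_left (pow_le_of_le_mul hr hs0 h n) hr)

end Recurrence

theorem le_sum_mul_of_antitone {s w : ℕ → ℝ} (hs : Antitone s) (hw : ∀ j, 0 ≤ w j) {N : ℕ}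
    (hw1 : ∑ j ∈ Finset.range (N + 1), w j = 1) :
    s N ≤ ∑ j ∈ Finset.range (N + 1), w j * s j := by
  calc s N = ∑ j ∈ Finset.range (N + 1), w j * s N := by rw [← Finset.sum_mul, hw1, one_mul]
    _ ≤ _ := Finset.sum_le_sum fun j hj =>
      mul_le_mul_of_nonneg_left (hs (Nat.lt_succ_iff.1 (Finset.mem_range.1 hj))) (hw j)

theorem sum_mul_le_of_monotone {s w : ℕ → ℝ} (hs : Monotone s) (hw : ∀ j, 0 ≤ w j) {N : ℕ}
    (hw1 : ∑ j ∈ Finset.range (N + 1), w j = 1) :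
    ∑ j ∈ Finset.range (N + 1), w j * s j ≤ s N := by
  calc _ ≤ ∑ j ∈ Finset.range (N + 1), w j * s N := Finset.sum_le_sum fun j hj =>
      mul_le_mul_of_nonneg_left (hs (Nat.lt_succ_iff.1 (Finset.mem_range.1 hj))) (hw j)
    _ = s N := by rw [← Finset.sum_mul, hw1, one_mul]

section Convexity

variable {s : ℕ → ℝ} {w : ℕ → ℕ → ℝ}

theorem pow_le_of_monotone_of_mul_eq_sum (hs : Monotone s) (hs0 : s 0 = 1) (hs1 : 0 ≤ s 1)
    (hw : ∀ n j, 0 ≤ w n j) (hw1 : ∀ n, ∑ j ∈ Finset.range (1 + n + 1), w n j = 1)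
    (hmul : ∀ n, s 1 * s n = ∑ j ∈ Finset.range (1 + n + 1), w n j * s j) :
    ∀ n, s 1 ^ n ≤ s n :=
  le_pow_of_mul_le hs1 hs0 fun n => by
    rw [hmul, add_comm 1 n]
    exact sum_mul_le_of_monotone hs (hw n) (add_comm 1 n ▸ hw1 n)

theorem le_pow_of_antitone_of_mul_eq_sum (hs : Antitone s) (hs0 : s 0 = 1) (hs1 : 0 ≤ s 1)
    (hw : ∀ n j, 0 ≤ w n j) (hw1 : ∀ n, ∑ j ∈ Finset.range (1 + n + 1), w n j = 1)
    (hmul : ∀ n, s 1 * s n = ∑ j ∈ Finset.range (1 + n + 1), w n j * s j) :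
    ∀ n, s n ≤ s 1 ^ n :=
  pow_le_of_le_mul hs1 hs0 fun n => by
    rw [hmul, add_comm 1 n]
    exact le_sum_mul_of_antitone hs (hw n) (add_comm 1 n ▸ hw1 n)

end Convexity

theorem Continuous.integrable_of_measure_compl_eq_zero {μ : Measure ℝ} [IsFiniteMeasure μ]
    {K : Set ℝ} (hK : IsCompact K) (hK0 : μ Kᶜ = 0) {f : ℝ → ℝ} (hf : Continuous f) :
    Integrable f μ := by
  rw [← Measure.restrict_eq_self_of_ae_mem (mem_ae_iff.2 hK0)]
  exact hf.continuousOn.integrableOn_compact hK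

section OrthogonalPolynomials

variable {a b c : ℕ → ℝ} {p : ℕ → ℝ → ℝ} {μ : Measure ℝ}

theorem continuous_of_three_term_recurrence (ha : ∀ n, 1 ≤ n → a n ≠ 0)
    (hp0 : ∀ y, p 0 y = 1) (hp1 : ∀ y, p 1 y = (y - b 0) / a 0)
    (hrec : ∀ n, 1 ≤ n → ∀ y,
      p 1 y * p n y = a n * p (n + 1) y + b n * p n y + c n * p (n - 1) y) :
    ∀ n, Continuous (p n) := by
  have hcont1 : Continuous (p 1) :=
    (by fun_prop : Continuous fun y => (y - b 0) / a 0).congr fun y => (hp1 y).symm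
  refine Nat.twoStepInduction ?_ hcont1 fun n hn hn1 => ?_
  · exact continuous_const.congr fun y => (hp0 y).symm
  · refine (by fun_prop : Continuous fun y =>
      (p 1 y * p (n + 1) y - b (n + 1) * p (n + 1) y - c (n + 1) * p n y) / a (n + 1)).congr
      fun y => ?_
    rw [div_eq_iff (ha (n + 1) (Nat.le_add_left 1 n)), hrec (n + 1) (Nat.le_add_left 1 n),
      Nat.add_sub_cancel]
    ring

theorem sum_linearization_eq_one {g : ℕ → ℕ → ℕ → ℝ} (hnorm : ∀ n, p n 1 = 1)
    (hg : ∀ n k y, p n y * p k y = ∑ j ∈ Finset.range (n + k + 1), g n k j * p j y) (n k : ℕ) :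
    ∑ j ∈ Finset.range (n + k + 1), g n k j = 1 := by
  simpa [hnorm] using (hg n k 1).symm

theorem linearization_zero_eq_integral [IsProbabilityMeasure μ] {g : ℕ → ℕ → ℕ → ℝ}
    (hp0 : ∀ y, p 0 y = 1) (hint : ∀ n k, Integrable (fun y => p n y * p k y) μ)
    (horth : ∀ n k, n ≠ k → ∫ y, p n y * p k y ∂μ = 0)
    (hg : ∀ n k y, p n y * p k y = ∑ j ∈ Finset.range (n + k + 1), g n k j * p j y) (n k : ℕ) :
    g n k 0 = ∫ y, p n y * p k y ∂μ := by
  have hint1 : ∀ j, Integrable (p j) μ := fun j => by simpa [hp0] using hint j 0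
  have hmean : ∀ j, ∫ y, p j y ∂μ = if j = 0 then 1 else 0 := fun j => by
    split_ifs with hj
    · simp [hj, hp0]
    · simpa [hp0] using horth j 0 hj
  simp_rw [hg n k, integral_finsetSum _ fun j _ => (hint1 j).const_mul _, integral_const_mul,
    hmean, mul_ite, mul_one, mul_zero, Finset.sum_ite_eq', Finset.mem_range, Nat.zero_lt_succ,
    if_true]

theorem integral_mul_mul_of_three_term_recurrence
    (hrec : ∀ n, 1 ≤ n → ∀ y,
      p 1 y * p n y = a n * p (n + 1) y + b n * p n y + c n * p (n - 1) y)
    (hint : ∀ n k, Integrable (fun y => p n y * p k y) μ) {n : ℕ} (hn : 1 ≤ n) (j : ℕ) :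
    ∫ y, p 1 y * p n y * p j y ∂μ = a n * ∫ y, p (n + 1) y * p j y ∂μ
      + b n * ∫ y, p n y * p j y ∂μ + c n * ∫ y, p (n - 1) y * p j y ∂μ := by
  simp_rw [hrec n hn, add_mul, mul_assoc]
  rw [integral_add ?_ ((hint _ _).const_mul _),
    integral_add ((hint _ _).const_mul _) ((hint _ _).const_mul _),
    integral_const_mul, integral_const_mul, integral_const_mul]
  exact ((hint _ _).const_mul _).add ((hint _ _).const_mul _)

theorem integral_mul_self_pos [IsProbabilityMeasure μ] (ha : ∀ n, 1 ≤ n → 0 < a n)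
    (hc : ∀ n, 1 ≤ n → 0 < c n) (hp0 : ∀ y, p 0 y = 1)
    (hrec : ∀ n, 1 ≤ n → ∀ y,
      p 1 y * p n y = a n * p (n + 1) y + b n * p n y + c n * p (n - 1) y)
    (hint : ∀ n k, Integrable (fun y => p n y * p k y) μ)
    (horth : ∀ n k, n ≠ k → ∫ y, p n y * p k y ∂μ = 0) :
    ∀ n, 0 < ∫ y, p n y * p n y ∂μ := by
  have hup : ∀ n, 1 ≤ n →
      ∫ y, p 1 y * p n y * p (n + 1) y ∂μ = a n * ∫ y, p (n + 1) y * p (n + 1) y ∂μ := by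
    intro n hn
    rw [integral_mul_mul_of_three_term_recurrence hrec hint hn, horth n (n + 1) (by omega),
      horth (n - 1) (n + 1) (by omega)]
    ring
  have hdown : ∀ n, 1 ≤ n →
      ∫ y, p 1 y * p n y * p (n - 1) y ∂μ = c n * ∫ y, p (n - 1) y * p (n - 1) y ∂μ := by
    intro n hn
    rw [integral_mul_mul_of_three_term_recurrence hrec hint hn, horth (n + 1) (n - 1) (by omega),
      horth n (n - 1) (by omega)]
    ring
  intro n
  induction n with
  | zero => simp [hp0]
  | succ n ih =>
    rcases Nat.eq_zero_or_pos n with rfl | hn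
    · have h1 := hdown 1 le_rfl
      simp only [Nat.sub_self, hp0, mul_one, integral_const, probReal_univ, smul_eq_mul] at h1
      exact h1 ▸ hc 1 le_rfl
    · have h := hup n hn
      have h' := hdown (n + 1) (by omega)
      rw [Nat.add_sub_cancel] at h'
      rw [show ∫ y, p 1 y * p n y * p (n + 1) y ∂μ = ∫ y, p 1 y * p (n + 1) y * p n y ∂μ by
        simp_rw [mul_right_comm], h'] at h
      exact (mul_pos_iff_of_pos_left (ha n hn)).1 (h ▸ mul_pos (hc (n + 1) (by omega)) ih)

end OrthogonalPolynomials

theorem stmt3_general    (a b c : ℕ → ℝ)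
    (ha : ∀ n : ℕ, 0 < a n) (hc : ∀ n : ℕ, 1 ≤ n → 0 < c n)
    (p : ℕ → ℝ → ℝ)
    (hp0 : ∀ y : ℝ, p 0 y = 1)
    (hp1 : ∀ y : ℝ, p 1 y = (y - b 0) / a 0)
    (hrec : ∀ n : ℕ, 1 ≤ n → ∀ y : ℝ,
      p 1 y * p n y = a n * p (n + 1) y + b n * p n y + c n * p (n - 1) y)
    (hnorm : ∀ n : ℕ, p n 1 = 1)
    (g : ℕ → ℕ → ℕ → ℝ)
    (hg : ∀ n k : ℕ, ∀ y : ℝ,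
      p n y * p k y = ∑ j ∈ Finset.range (n + k + 1), g n k j * p j y)
    (hgnn : ∀ n k j : ℕ, 0 ≤ g n k j)
    (μ : Measure ℝ) [IsProbabilityMeasure μ]
    (hcsupp : ∃ K : Set ℝ, IsCompact K ∧ μ Kᶜ = 0)
    (horth : ∀ n k : ℕ, n ≠ k → ∫ y, p n y * p k y ∂μ = 0)
    (x : ℝ) (αx : BoundedContinuousFunction ℕ ℝ)
    (hαx : ∀ n : ℕ, αx n = p n x)
    (hpos : ∀ n : ℕ, 0 ≤ p n x)
    (huniq : ∃! m : BoundedContinuousFunction ℕ ℝ →L[ℝ] ℝ, IsAlphaMean g αx m) :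
    ∀ n : ℕ, p n x = 1 := by
  obtain ⟨K, hK, hK0⟩ := hcsupp
  have hcont := continuous_of_three_term_recurrence (fun n _ => (ha n).ne') hp0 hp1 hrec
  have hint : ∀ n k, Integrable (fun y => p n y * p k y) μ := fun n k =>
    ((hcont n).mul (hcont k)).integrable_of_measure_compl_eq_zero hK hK0
  have habc : ∀ n, 1 ≤ n → a n + b n + c n = 1 := fun n hn => by
    simpa [hnorm] using (hrec n hn 1).symm
  have hmono := monotone_of_three_term_recurrence (fun n _ => ha n) (fun n hn => (hc n hn).le)
    habc (fun n hn => hrec n hn x) (hp0 x) hpos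
  have hanti := antitone_of_three_term_recurrence (fun n _ => ha n) (fun n hn => (hc n hn).le)
    habc (fun n hn => hrec n hn x) (hp0 x) hpos
  have hsum := fun n => sum_linearization_eq_one hnorm hg 1 n
  have hle : p 1 x ≤ 1 := by
    by_contra! h1
    obtain ⟨n, hn⟩ := pow_unbounded_of_one_lt ‖αx‖ h1
    have hpow := pow_le_of_monotone_of_mul_eq_sum (hmono h1.le) (hp0 x) (hpos 1) (hgnn 1) hsum
      (fun n => hg 1 n x) n
    linarith [(abs_le.1 (hαx n ▸ αx.norm_coe_le_norm n)).2]
  have hge : 1 ≤ p 1 x := by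
    by_contra! h1
    have hpow := le_pow_of_antitone_of_mul_eq_sum (hanti h1.le) (hp0 x) (hpos 1) (hgnn 1) hsum
      (fun n => hg 1 n x)
    have htend : Tendsto αx atTop (𝓝 0) := squeeze_zero (fun n => hαx n ▸ hpos n)
      (fun n => hαx n ▸ hpow n) (tendsto_pow_atTop_nhds_zero_of_lt_one (hpos 1) h1)
    have hg0 := linearization_zero_eq_integral hp0 hint horth hg
    obtain ⟨m, hm, -⟩ := huniq
    refine not_isAlphaMean_of_tendsto_zero hgnn (fun n k hnk => (hg0 n k).trans (horth n k hnk))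
      (fun n => hg0 n n ▸ integral_mul_self_pos (fun n _ => ha n) hc hp0 hrec hint horth n)
      (fun n k => by simpa only [hαx] using hg n k x) (by rw [hαx, hp0])
      (fun n => hαx n ▸ hpos n) htend hm
  exact fun n => le_antisymm (hp0 x ▸ hanti hle (Nat.zero_le n))
    (hp0 x ▸ hmono hge (Nat.zero_le n))

theorem stmt3    (a b c : ℕ → ℝ)
    (ha : ∀ n : ℕ, 0 < a n) (hc : ∀ n : ℕ, 1 ≤ n → 0 < c n)
    (p : ℕ → ℝ → ℝ)
    (hp0 : ∀ y : ℝ, p 0 y = 1)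
    (hp1 : ∀ y : ℝ, p 1 y = (y - b 0) / a 0)
    (hrec : ∀ n : ℕ, 1 ≤ n → ∀ y : ℝ,
      p 1 y * p n y = a n * p (n + 1) y + b n * p n y + c n * p (n - 1) y)
    (hnorm : ∀ n : ℕ, p n 1 = 1)
    (g : ℕ → ℕ → ℕ → ℝ)
    (hg : ∀ n k : ℕ, ∀ y : ℝ,
      p n y * p k y = ∑ j ∈ Finset.range (n + k + 1), g n k j * p j y)
    (hgnn : ∀ n k j : ℕ, 0 ≤ g n k j)
    (μ : Measure ℝ) [IsProbabilityMeasure μ]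
    (hcsupp : ∃ K : Set ℝ, IsCompact K ∧ μ Kᶜ = 0)
    (horth : ∀ n k : ℕ, n ≠ k → ∫ y, p n y * p k y ∂μ = 0)
    (h : ℕ → ℝ)
    (hh : ∀ n : ℕ, h n = (∫ y, (p n y) ^ 2 ∂μ)⁻¹)
    (x : ℝ) (αx : BoundedContinuousFunction ℕ ℝ)
    (hαx : ∀ n : ℕ, αx n = p n x)
    (hpos : ∀ n : ℕ, 0 ≤ p n x)
    (huniq : ∃! m : BoundedContinuousFunction ℕ ℝ →L[ℝ] ℝ, IsAlphaMean g αx m) :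
    ∀ n : ℕ, p n x = 1 :=
  stmt3_general a b c ha hc p hp0 hp1 hrec hnorm g hg hgnn μ hcsupp horth x αx hαx hpos huniq
end
end

section
/- Let x, y ∈ 𝒟 with α_y ≠ α_x, and let m be any α_x-mean on ℓ∞(ℕ₀) (uniqueness is not assumed). Then m(α_y) = 0; i.e. an α_x-mean annihilates every bounded character different from α_x. -/
open Filter Topology MeasureTheory

noncomputable section

namespace IsAlphaMean

variable {g : ℕ → ℕ → ℕ → ℝ} {α : BoundedContinuousFunction ℕ ℝ}
  {m : BoundedContinuousFunction ℕ ℝ →L[ℝ] ℝ}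

theorem apply_eq_zero_of_translate_eq_smul (hm : IsAlphaMean g α m)
    {f : BoundedContinuousFunction ℕ ℝ} {ev : ℕ → ℝ}
    (hf : ∀ n k, ∑ j ∈ Finset.range (n + k + 1), g n k j * f j = ev n * f k)
    {n : ℕ} (hn : ev n ≠ α n) : m f = 0 := by
  have hmean : m (ev n • f) = α n * m f :=
    hm.2 n f (ev n • f) fun k => by simp [hf n k]
  rw [map_smul, smul_eq_mul] at hmean
  have hsub : (ev n - α n) * m f = 0 := by linear_combination hmean
  exact (mul_eq_zero.mp hsub).resolve_left (sub_ne_zero.mpr hn)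

end IsAlphaMean

theorem stmt4_general
    (p : ℕ → ℝ → ℝ)
    (g : ℕ → ℕ → ℕ → ℝ)
    (hg : ∀ n k : ℕ, ∀ y : ℝ,
      p n y * p k y = ∑ j ∈ Finset.range (n + k + 1), g n k j * p j y)
    (y : ℝ) (αx αy : BoundedContinuousFunction ℕ ℝ)
    (hαy : ∀ n : ℕ, αy n = p n y)
    (hne : αy ≠ αx)
    (m : BoundedContinuousFunction ℕ ℝ →L[ℝ] ℝ)
    (hm : IsAlphaMean g αx m) :
    m αy = 0 := by
  obtain ⟨n, hn⟩ := DFunLike.ne_iff.mp hne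
  -- the product formula makes `αy` a joint eigenvector of the translations: `T_n αy = αy(n) αy`
  refine hm.apply_eq_zero_of_translate_eq_smul (ev := αy) (fun n k => ?_) hn
  simp only [hαy, hg]

theorem stmt4    (a b c : ℕ → ℝ)
    (ha : ∀ n : ℕ, 0 < a n) (hc : ∀ n : ℕ, 1 ≤ n → 0 < c n)
    (p : ℕ → ℝ → ℝ)
    (hp0 : ∀ y : ℝ, p 0 y = 1)
    (hp1 : ∀ y : ℝ, p 1 y = (y - b 0) / a 0)
    (hrec : ∀ n : ℕ, 1 ≤ n → ∀ y : ℝ,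
      p 1 y * p n y = a n * p (n + 1) y + b n * p n y + c n * p (n - 1) y)
    (hnorm : ∀ n : ℕ, p n 1 = 1)
    (g : ℕ → ℕ → ℕ → ℝ)
    (hg : ∀ n k : ℕ, ∀ y : ℝ,
      p n y * p k y = ∑ j ∈ Finset.range (n + k + 1), g n k j * p j y)
    (hgnn : ∀ n k j : ℕ, 0 ≤ g n k j)
    (x y : ℝ) (αx αy : BoundedContinuousFunction ℕ ℝ)
    (hαx : ∀ n : ℕ, αx n = p n x)
    (hαy : ∀ n : ℕ, αy n = p n y)
    (hne : αy ≠ αx)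
    (m : BoundedContinuousFunction ℕ ℝ →L[ℝ] ℝ)
    (hm : IsAlphaMean g αx m) :
    m αy = 0 :=
  stmt4_general p g hg y αx αy hαy hne m hm
end
end

section
/- Suppose x ∈ 𝒟 ∩ supp μ, x is an isolated point of the character set 𝒟, and Σ_{n≥0} h(n)·|p_n(x)| < ∞. Then the functional f ↦ (Σ_{n≥0} h(n)·p_n(x)·f(n)) / (Σ_{n≥0} h(n)·p_n(x)²) is an α_x-mean on ℓ∞(ℕ₀), and it is the only α_x-mean; i.e. the polynomial hypergroup ℕ₀ is α_x-amenable with a unique α_x-mean. -/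
/-!
Orthogonality identifies the linearization coefficients with the tensor `h j ∫ pₙ pₖ pⱼ`,
which is symmetric in its three indices. This gives the commutativity `(Tₙ f)(k) = (Tₖ f)(n)`
and the Haar identity `∑ₖ h(k) pₖ(x) g(n,k,j) = h(j) pₙ(x) pⱼ(x)`. The latter says that the
summable weight `w = h·α_x` satisfies `⟨w, Tₙ f⟩ = α_x(n) ⟨w, f⟩`, so `f ↦ ⟨w, f⟩ / ⟨w, α_x⟩`
is an `α_x`-mean. Conversely, for any `α_x`-mean `m` the series `∑ₙ w(n) Tₙ f`, convergent in
`ℓ∞`, equals `⟨w, f⟩ α_x` by commutativity and the Haar identity, while `m` maps it to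
`⟨w, α_x⟩ m(f)`. The weights are finite because `aₙ ∫ pₙ₊₁² = cₙ₊₁ ∫ pₙ²` keeps `∫ pₙ²` positive.
-/

open Filter Topology MeasureTheory

noncomputable section

open scoped BoundedContinuousFunction
open BoundedContinuousFunction (evalCLM evalCLM_apply coe_smul norm_ofNormedAddCommGroup_le)

theorem tsum_sum_range_comm {F : ℕ → ℕ → ℝ} {d : ℕ → ℕ}
    (hF : Summable fun i => ∑ j ∈ Finset.range (d i), |F i j|) :
    ∑' i, ∑ j ∈ Finset.range (d i), F i j = ∑' j, ∑' i, if j < d i then F i j else 0 := by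
  set F' : ℕ → ℕ → ℝ := fun i j => if j < d i then F i j else 0
  have hrow : ∀ i, ∀ j ∉ Finset.range (d i), F' i j = 0 := fun i j hj =>
    if_neg (by simpa using hj)
  have hrow_sum : ∀ i, ∑' j, F' i j = ∑ j ∈ Finset.range (d i), F i j := fun i => by
    rw [tsum_eq_sum (hrow i)]
    exact Finset.sum_congr rfl fun j hj => if_pos (Finset.mem_range.mp hj)
  have hrow_abs : ∀ i, ∑' j, |F' i j| = ∑ j ∈ Finset.range (d i), |F i j| := fun i => by
    rw [tsum_eq_sum (s := Finset.range (d i)) fun j hj => by rw [hrow i j hj, abs_zero]]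
    exact Finset.sum_congr rfl fun j hj => by simp only [F', if_pos (Finset.mem_range.mp hj)]
  have hsummable : Summable (Function.uncurry F') := by
    refine summable_abs_iff.mp ((summable_prod_of_nonneg fun _ => abs_nonneg _).mpr ⟨?_, ?_⟩)
    · exact fun i => summable_of_ne_finset_zero (s := Finset.range (d i)) fun j hj => by
        simp only [Function.uncurry_apply_pair, hrow i j hj, abs_zero]
    · simpa only [Function.uncurry_apply_pair, hrow_abs] using hF
  simp_rw [← hrow_sum]
  exact (hsummable.tsum_comm).symm

section Means

variable {g : ℕ → ℕ → ℕ → ℝ}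

def hypergroupTranslate (g : ℕ → ℕ → ℕ → ℝ) (n : ℕ) (f : ℕ → ℝ) (k : ℕ) : ℝ :=
  ∑ j ∈ Finset.range (n + k + 1), g n k j * f j

theorem abs_hypergroupTranslate_le {n : ℕ} {f : ℕ → ℝ} {C : ℝ} (hgnn : ∀ k j, 0 ≤ g n k j)
    (hg1 : ∀ k, ∑ j ∈ Finset.range (n + k + 1), g n k j = 1) (hf : ∀ j, |f j| ≤ C) (k : ℕ) :
    |hypergroupTranslate g n f k| ≤ C :=
  calc |hypergroupTranslate g n f k|
      ≤ ∑ j ∈ Finset.range (n + k + 1), |g n k j * f j| := Finset.abs_sum_le_sum_abs _ _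
    _ ≤ ∑ j ∈ Finset.range (n + k + 1), g n k j * C := Finset.sum_le_sum fun j _ => by
        rw [abs_mul, abs_of_nonneg (hgnn k j)]
        exact mul_le_mul_of_nonneg_left (hf j) (hgnn k j)
    _ = C := by rw [← Finset.sum_mul, hg1 k, one_mul]

def weightedSum (w : ℕ → ℝ) : (ℕ →ᵇ ℝ) →L[ℝ] ℝ :=
  ∑' n, w n • evalCLM ℝ n

theorem norm_evalCLM_le (n : ℕ) :
    ‖(evalCLM ℝ n : (ℕ →ᵇ ℝ) →L[ℝ] ℝ)‖ ≤ 1 :=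
  ContinuousLinearMap.opNorm_le_bound _ zero_le_one fun f => by
    simpa using f.norm_coe_le_norm n

theorem weightedSum_apply {w : ℕ → ℝ} (hw : Summable fun n => ‖w n‖) (f : ℕ →ᵇ ℝ) :
    weightedSum w f = ∑' n, w n * f n := by
  have hsum := Summable.of_norm_bounded (E := (ℕ →ᵇ ℝ) →L[ℝ] ℝ)
    (f := fun n => w n • evalCLM ℝ n) hw fun n =>
      (ContinuousLinearMap.opNorm_smul_le (w n) _).trans
        (mul_le_of_le_one_right (norm_nonneg _) (norm_evalCLM_le n))
  exact (ContinuousLinearMap.apply ℝ ℝ f).map_tsum hsum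

variable {α : ℕ →ᵇ ℝ} {w : ℕ → ℝ}

theorem isAlphaMean_smul_weightedSum (hw : Summable fun n => ‖w n‖)
    (hinv : ∀ n (f : ℕ →ᵇ ℝ), ∑' k, w k * hypergroupTranslate g n f k = α n * ∑' k, w k * f k)
    (hwα : ∑' n, w n * α n ≠ 0) :
    IsAlphaMean g α ((∑' n, w n * α n)⁻¹ • weightedSum w) := by
  refine ⟨?_, fun n f Tf hTf => ?_⟩
  · rw [smul_apply, weightedSum_apply hw, smul_eq_mul, inv_mul_cancel₀ hwα]
  · simp only [smul_apply, weightedSum_apply hw, smul_eq_mul]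
    have hTf' : ∀ k, w k * Tf k = w k * hypergroupTranslate g n f k := fun k => by
      rw [hTf k, hypergroupTranslate]
    rw [tsum_congr hTf', hinv]
    ring

theorem IsAlphaMean.tsum_mul_apply_eq {m : (ℕ →ᵇ ℝ) →L[ℝ] ℝ} (hm : IsAlphaMean g α m)
    (hgnn : ∀ n k j, 0 ≤ g n k j) (hg1 : ∀ n k, ∑ j ∈ Finset.range (n + k + 1), g n k j = 1)
    (hw : Summable fun n => ‖w n‖)
    (hcomm : ∀ n k (f : ℕ → ℝ), hypergroupTranslate g n f k = hypergroupTranslate g k f n)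
    (hinv : ∀ n (f : ℕ →ᵇ ℝ), ∑' k, w k * hypergroupTranslate g n f k = α n * ∑' k, w k * f k)
    (f : ℕ →ᵇ ℝ) :
    (∑' n, w n * α n) * m f = ∑' n, w n * f n := by
  have hT : ∀ n, ∃ Tf : ℕ →ᵇ ℝ, (∀ k, Tf k = hypergroupTranslate g n f k) ∧ ‖Tf‖ ≤ ‖f‖ := fun n =>
    ⟨.ofNormedAddCommGroup _ continuous_of_discreteTopology ‖f‖ fun k =>
        abs_hypergroupTranslate_le (hgnn n) (hg1 n)
          (fun j => by simpa using f.norm_coe_le_norm j) k,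
      fun k => rfl, norm_ofNormedAddCommGroup_le _ (norm_nonneg f) _⟩
  choose T hTapply hTnorm using hT
  have hsum : Summable fun n => w n • T n :=
    Summable.of_norm_bounded (hw.mul_right ‖f‖) fun n =>
      (norm_smul_le _ _).trans (mul_le_mul_of_nonneg_left (hTnorm n) (norm_nonneg _))
  have hL : ∑' n, w n • T n = (∑' n, w n * f n) • α := by
    ext k
    rw [← evalCLM_apply ℝ, (evalCLM ℝ k).map_tsum hsum]
    simp only [evalCLM_apply, coe_smul,
      smul_eq_mul, hTapply, hcomm _ k]
    rw [hinv k f, mul_comm]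
  have hmL := m.map_tsum hsum
  simp only [map_smul, smul_eq_mul, hm.2 _ f _ (hTapply _)] at hmL
  rw [hL, map_smul, hm.1, smul_eq_mul, mul_one] at hmL
  rw [hmL, ← tsum_mul_right]
  exact tsum_congr fun n => by ring

end Means

theorem Continuous.integrable_of_measure_compl_eq_zero_s5 {X E : Type*} [TopologicalSpace X]
    [MeasurableSpace X] [OpensMeasurableSpace X] [T2Space X] [NormedAddCommGroup E]
    {μ : Measure X} [IsFiniteMeasureOnCompacts μ] {K : Set X} (hK : IsCompact K)
    (hKμ : μ Kᶜ = 0) {f : X → E} (hf : Continuous f) : Integrable f μ := by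
  rw [← Measure.restrict_eq_self_of_ae_mem (ae_iff.mpr hKμ)]
  exact hf.continuousOn.integrableOn_compact hK

section ThreeTermRecurrence

variable {a b c : ℕ → ℝ} {p : ℕ → ℝ → ℝ} {μ : Measure ℝ}

theorem continuous_of_threeTermRecurrence (ha : ∀ n, a n ≠ 0) (hp0 : ∀ y, p 0 y = 1)
    (hp1 : ∀ y, p 1 y = (y - b 0) / a 0)
    (hrec : ∀ n, 1 ≤ n → ∀ y,
      p 1 y * p n y = a n * p (n + 1) y + b n * p n y + c n * p (n - 1) y)
    (n : ℕ) : Continuous (p n) := by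
  have hcont1 : Continuous (p 1) := by
    rw [funext hp1]
    fun_prop
  induction n using Nat.twoStepInduction with
  | zero => simpa only [funext hp0] using continuous_const
  | one => exact hcont1
  | more n hcont hcont' =>
    have hp : p (n + 2) = fun y =>
        (p 1 y * p (n + 1) y - b (n + 1) * p (n + 1) y - c (n + 1) * p n y) / a (n + 1) :=
      funext fun y => by
        rw [eq_div_iff (ha _), hrec (n + 1) (by omega) y, Nat.add_sub_cancel]
        ring
    rw [hp]
    fun_prop

theorem integral_mul_mul_eq_of_recurrence
    (hrec : ∀ n, 1 ≤ n → ∀ y,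
      p 1 y * p n y = a n * p (n + 1) y + b n * p n y + c n * p (n - 1) y)
    (hcont : ∀ n, Continuous (p n)) (hint : ∀ f : ℝ → ℝ, Continuous f → Integrable f μ)
    {n : ℕ} (hn : 1 ≤ n) (m : ℕ) :
    ∫ y, p 1 y * p n y * p m y ∂μ = a n * ∫ y, p (n + 1) y * p m y ∂μ +
      b n * ∫ y, p n y * p m y ∂μ + c n * ∫ y, p (n - 1) y * p m y ∂μ := by
  have hI : ∀ k, Integrable (fun y => p k y * p m y) μ := fun k =>
    hint _ ((hcont k).mul (hcont m))
  calc ∫ y, p 1 y * p n y * p m y ∂μ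
      = ∫ y, a n * (p (n + 1) y * p m y) + b n * (p n y * p m y)
          + c n * (p (n - 1) y * p m y) ∂μ :=
        integral_congr_ae (Eventually.of_forall fun y => by
          simp only [hrec n hn y]
          ring)
    _ = _ := by
      rw [integral_add, integral_add, integral_const_mul, integral_const_mul, integral_const_mul]
      all_goals first
        | exact (hI _).const_mul _
        | exact ((hI _).const_mul _).add ((hI _).const_mul _)

theorem integral_sq_pos_of_recurrence [IsProbabilityMeasure μ] (ha : ∀ n, 0 < a n)
    (hc : ∀ n, 1 ≤ n → 0 < c n) (hp0 : ∀ y, p 0 y = 1)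
    (hrec : ∀ n, 1 ≤ n → ∀ y,
      p 1 y * p n y = a n * p (n + 1) y + b n * p n y + c n * p (n - 1) y)
    (horth : ∀ n k, n ≠ k → ∫ y, p n y * p k y ∂μ = 0)
    (hcont : ∀ n, Continuous (p n)) (hint : ∀ f : ℝ → ℝ, Continuous f → Integrable f μ)
    (n : ℕ) : 0 < ∫ y, p n y ^ 2 ∂μ := by
  simp only [sq]
  induction n using Nat.twoStepInduction with
  | zero => simp [hp0]
  | one =>
    have h1 := integral_mul_mul_eq_of_recurrence hrec hcont hint (n := 1) le_rfl 0
    rw [horth 2 0 (by omega), horth 1 0 (by omega)] at h1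
    simp only [hp0, mul_one, mul_zero, zero_add] at h1
    rw [h1]
    simpa using hc 1 le_rfl
  | more n _ hpos =>
    have hup := integral_mul_mul_eq_of_recurrence hrec hcont hint (n := n + 1) (by omega) (n + 2)
    have hdown := integral_mul_mul_eq_of_recurrence hrec hcont hint (n := n + 2) (by omega) (n + 1)
    simp only [horth (n + 1) (n + 2) (by omega), horth n (n + 2) (by omega),
      horth (n + 3) (n + 1) (by omega), horth (n + 2) (n + 1) (by omega),
      Nat.add_sub_cancel, mul_zero, add_zero, zero_add] at hup hdown
    have hsame : ∫ y, p 1 y * p (n + 1) y * p (n + 2) y ∂μ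
        = ∫ y, p 1 y * p (n + 2) y * p (n + 1) y ∂μ :=
      integral_congr_ae (Eventually.of_forall fun y => by ring)
    refine pos_of_mul_pos_right (a := a (n + 1)) ?_ (ha _).le
    rw [← hup, hsame, hdown]
    exact mul_pos (hc _ (by omega)) hpos

end ThreeTermRecurrence

section Linearization

variable {p : ℕ → ℝ → ℝ} {g : ℕ → ℕ → ℕ → ℝ} {μ : Measure ℝ} {h : ℕ → ℝ}

theorem integral_mul_mul_eq_ite
    (hg : ∀ n k y, p n y * p k y = ∑ j ∈ Finset.range (n + k + 1), g n k j * p j y)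
    (horth : ∀ n k, n ≠ k → ∫ y, p n y * p k y ∂μ = 0)
    (hcont : ∀ n, Continuous (p n)) (hint : ∀ f : ℝ → ℝ, Continuous f → Integrable f μ)
    (n k j : ℕ) :
    ∫ y, p n y * p k y * p j y ∂μ =
      if j < n + k + 1 then g n k j * ∫ y, p j y ^ 2 ∂μ else 0 := by
  have hterm : ∀ m, ∫ y, g n k m * (p m y * p j y) ∂μ =
      if m = j then g n k j * ∫ y, p j y ^ 2 ∂μ else 0 := fun m => by
    rw [integral_const_mul]
    split_ifs with hmj
    · simp only [hmj, sq]
    · rw [horth m j hmj, mul_zero]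
  calc ∫ y, p n y * p k y * p j y ∂μ
      = ∫ y, ∑ m ∈ Finset.range (n + k + 1), g n k m * (p m y * p j y) ∂μ :=
        integral_congr_ae (Eventually.of_forall fun y => by
          simp only [hg n k y, Finset.sum_mul, mul_assoc])
    _ = ∑ m ∈ Finset.range (n + k + 1), ∫ y, g n k m * (p m y * p j y) ∂μ :=
        integral_finsetSum _ fun m _ => (hint _ ((hcont m).mul (hcont j))).const_mul _
    _ = _ := by simp only [hterm, Finset.sum_ite_eq', Finset.mem_range]

theorem ite_coeff_eq_mul_integral
    (hg : ∀ n k y, p n y * p k y = ∑ j ∈ Finset.range (n + k + 1), g n k j * p j y)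
    (horth : ∀ n k, n ≠ k → ∫ y, p n y * p k y ∂μ = 0)
    (hcont : ∀ n, Continuous (p n)) (hint : ∀ f : ℝ → ℝ, Continuous f → Integrable f μ)
    (hh : ∀ n, h n = (∫ y, p n y ^ 2 ∂μ)⁻¹) (hpos : ∀ n, 0 < ∫ y, p n y ^ 2 ∂μ) (n k j : ℕ) :
    (if j < n + k + 1 then g n k j else 0) = h j * ∫ y, p n y * p k y * p j y ∂μ := by
  rw [integral_mul_mul_eq_ite hg horth hcont hint, hh]
  split_ifs
  · field_simp [(hpos j).ne']
  · rw [mul_zero]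

variable
  (hgJ : ∀ n k j, (if j < n + k + 1 then g n k j else 0) = h j * ∫ y, p n y * p k y * p j y ∂μ)
include hgJ

theorem hypergroupTranslate_comm (n k : ℕ) (f : ℕ → ℝ) :
    hypergroupTranslate g n f k = hypergroupTranslate g k f n := by
  rw [hypergroupTranslate, hypergroupTranslate, add_comm n k]
  refine Finset.sum_congr rfl fun j hj => ?_
  have hlt : j < n + k + 1 := by simpa [add_comm n k] using hj
  have hcoeff : g n k j = g k n j :=
    calc g n k j = h j * ∫ y, p n y * p k y * p j y ∂μ := by rw [← hgJ, if_pos hlt]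
      _ = h j * ∫ y, p k y * p n y * p j y ∂μ := by simp only [mul_comm (p n _) (p k _)]
      _ = g k n j := by rw [← hgJ, if_pos (by omega)]
  rw [hcoeff]

theorem tsum_mul_ite_coeff
    (hg : ∀ n k y, p n y * p k y = ∑ j ∈ Finset.range (n + k + 1), g n k j * p j y)
    (x : ℝ) (n j : ℕ) :
    ∑' k, h k * p k x * (if j < n + k + 1 then g n k j else 0) = h j * (p n x * p j x) := by
  have hsymm : ∀ k, h k * (if j < n + k + 1 then g n k j else 0) =
      h j * (if k < n + j + 1 then g n j k else 0) := fun k => by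
    rw [hgJ, hgJ]
    simp only [mul_right_comm _ (p k _) (p j _)]
    ring
  calc ∑' k, h k * p k x * (if j < n + k + 1 then g n k j else 0)
      = ∑' k, h j * (if k < n + j + 1 then g n j k * p k x else 0) :=
        tsum_congr fun k => by
          rw [mul_right_comm, hsymm, mul_assoc, ite_mul, zero_mul]
    _ = h j * ∑ k ∈ Finset.range (n + j + 1), g n j k * p k x := by
        rw [tsum_mul_left,
          tsum_eq_sum (s := Finset.range (n + j + 1)) fun k hk => if_neg (by simpa using hk)]
        exact congrArg _ (Finset.sum_congr rfl fun k hk => if_pos (Finset.mem_range.mp hk))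
    _ = h j * (p n x * p j x) := by rw [hg]

theorem tsum_mul_hypergroupTranslate
    (hg : ∀ n k y, p n y * p k y = ∑ j ∈ Finset.range (n + k + 1), g n k j * p j y)
    (hgnn : ∀ n k j, 0 ≤ g n k j) (hg1 : ∀ n k, ∑ j ∈ Finset.range (n + k + 1), g n k j = 1)
    {x : ℝ} (hw : Summable fun k => ‖h k * p k x‖) (n : ℕ) (f : ℕ →ᵇ ℝ) :
    ∑' k, h k * p k x * hypergroupTranslate g n f k = p n x * ∑' j, h j * p j x * f j := by
  have hf : ∀ j, |f j| ≤ ‖f‖ := fun j => by simpa using f.norm_coe_le_norm j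
  have habs : Summable fun k =>
      ∑ j ∈ Finset.range (n + k + 1), |h k * p k x * (g n k j * f j)| := by
    refine Summable.of_nonneg_of_le (fun k => Finset.sum_nonneg fun j _ => abs_nonneg _)
      (fun k => ?_) (hw.mul_right ‖f‖)
    have hT := (le_abs_self _).trans
      (abs_hypergroupTranslate_le (hgnn n) (hg1 n) (f := fun j => |f j|) (by simpa using hf) k)
    rw [hypergroupTranslate] at hT
    simp only [abs_mul _ (g n k _ * _), abs_mul (g n k _), abs_of_nonneg (hgnn n k _),
      ← Finset.mul_sum, Real.norm_eq_abs]
    exact mul_le_mul_of_nonneg_left hT (abs_nonneg _)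
  calc ∑' k, h k * p k x * hypergroupTranslate g n f k
      = ∑' k, ∑ j ∈ Finset.range (n + k + 1), h k * p k x * (g n k j * f j) := by
        simp only [hypergroupTranslate, Finset.mul_sum]
    _ = ∑' j, ∑' k, if j < n + k + 1 then h k * p k x * (g n k j * f j) else 0 :=
        tsum_sum_range_comm habs
    _ = ∑' j, (∑' k, h k * p k x * (if j < n + k + 1 then g n k j else 0)) * f j := by
        refine tsum_congr fun j => ?_
        rw [← tsum_mul_right]
        exact tsum_congr fun k => by split_ifs <;> ring
    _ = p n x * ∑' j, h j * p j x * f j := by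
        simp only [tsum_mul_ite_coeff hgJ hg, ← tsum_mul_left]
        exact tsum_congr fun j => by ring

end Linearization

theorem one_le_tsum_mul_sq {p : ℕ → ℝ → ℝ} {μ : Measure ℝ} [IsProbabilityMeasure μ] {h : ℕ → ℝ}
    (hp0 : ∀ y, p 0 y = 1) (hh : ∀ n, h n = (∫ y, p n y ^ 2 ∂μ)⁻¹)
    (hpos : ∀ n, 0 < ∫ y, p n y ^ 2 ∂μ) {x B : ℝ} (hB : ∀ n, |p n x| ≤ B)
    (hsum : Summable fun n => h n * |p n x|) :
    1 ≤ ∑' n, h n * p n x ^ 2 := by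
  have hh_nonneg : ∀ n, 0 ≤ h n := fun n => by
    rw [hh]
    exact (inv_pos.mpr (hpos n)).le
  have hsum_sq : Summable fun n => h n * p n x ^ 2 :=
    Summable.of_nonneg_of_le (fun n => mul_nonneg (hh_nonneg n) (sq_nonneg _))
      (fun n => by
        rw [← sq_abs, sq, ← mul_assoc]
        exact mul_le_mul_of_nonneg_left (hB n) (mul_nonneg (hh_nonneg n) (abs_nonneg _)))
      (hsum.mul_right B)
  calc 1 = h 0 * p 0 x ^ 2 := by simp [hh, hp0]
    _ ≤ ∑' n, h n * p n x ^ 2 :=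
      hsum_sq.le_tsum 0 fun n _ => mul_nonneg (hh_nonneg n) (sq_nonneg _)

theorem stmt5_general    (a b c : ℕ → ℝ)
    (ha : ∀ n : ℕ, 0 < a n) (hc : ∀ n : ℕ, 1 ≤ n → 0 < c n)
    (p : ℕ → ℝ → ℝ)
    (hp0 : ∀ y : ℝ, p 0 y = 1)
    (hp1 : ∀ y : ℝ, p 1 y = (y - b 0) / a 0)
    (hrec : ∀ n : ℕ, 1 ≤ n → ∀ y : ℝ,
      p 1 y * p n y = a n * p (n + 1) y + b n * p n y + c n * p (n - 1) y)
    (hnorm : ∀ n : ℕ, p n 1 = 1)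
    (g : ℕ → ℕ → ℕ → ℝ)
    (hg : ∀ n k : ℕ, ∀ y : ℝ,
      p n y * p k y = ∑ j ∈ Finset.range (n + k + 1), g n k j * p j y)
    (hgnn : ∀ n k j : ℕ, 0 ≤ g n k j)
    (μ : Measure ℝ) [IsProbabilityMeasure μ]
    (hcsupp : ∃ K : Set ℝ, IsCompact K ∧ μ Kᶜ = 0)
    (horth : ∀ n k : ℕ, n ≠ k → ∫ y, p n y * p k y ∂μ = 0)
    (h : ℕ → ℝ)
    (hh : ∀ n : ℕ, h n = (∫ y, (p n y) ^ 2 ∂μ)⁻¹)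
    (x : ℝ) (αx : BoundedContinuousFunction ℕ ℝ)
    (hαx : ∀ n : ℕ, αx n = p n x)
    (hsum : Summable fun n : ℕ => h n * |p n x|) :
    ∃ m : BoundedContinuousFunction ℕ ℝ →L[ℝ] ℝ,
      IsAlphaMean g αx m ∧
      (∀ f : BoundedContinuousFunction ℕ ℝ,
        m f = (∑' n : ℕ, h n * p n x * f n) / (∑' n : ℕ, h n * (p n x) ^ 2)) ∧
      ∀ m' : BoundedContinuousFunction ℕ ℝ →L[ℝ] ℝ,
        IsAlphaMean g αx m' → m' = m := by
  obtain ⟨K, hK, hKμ⟩ := hcsupp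
  have hcont := continuous_of_threeTermRecurrence (fun n => (ha n).ne') hp0 hp1 hrec
  have hint : ∀ f : ℝ → ℝ, Continuous f → Integrable f μ := fun f hf =>
    hf.integrable_of_measure_compl_eq_zero_s5 hK hKμ
  have hpos := integral_sq_pos_of_recurrence ha hc hp0 hrec horth hcont hint
  have hgJ := ite_coeff_eq_mul_integral hg horth hcont hint hh hpos
  have hg1 : ∀ n k, ∑ j ∈ Finset.range (n + k + 1), g n k j = 1 := fun n k => by
    simpa [hnorm] using (hg n k 1).symm
  have hw : Summable fun n => ‖h n * p n x‖ := by
    refine hsum.congr fun n => ?_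
    rw [Real.norm_eq_abs, abs_mul, abs_of_pos (a := h n) (by rw [hh]; exact inv_pos.mpr (hpos n))]
  have hinv : ∀ n (f : ℕ →ᵇ ℝ), ∑' k, h k * p k x * hypergroupTranslate g n f k =
      αx n * ∑' k, h k * p k x * f k := fun n f => by
    rw [hαx, tsum_mul_hypergroupTranslate hgJ hg hgnn hg1 hw]
  have hwα : ∑' n, h n * p n x * αx n = ∑' n, h n * p n x ^ 2 :=
    tsum_congr fun n => by rw [hαx]; ring
  have hc0 : ∑' n, h n * p n x ^ 2 ≠ 0 := (zero_lt_one.trans_le (one_le_tsum_mul_sq hp0 hh hpos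
    (fun n => by simpa [hαx] using αx.norm_coe_le_norm n) hsum)).ne'
  refine ⟨_, isAlphaMean_smul_weightedSum hw hinv (hwα ▸ hc0), fun f => ?_, fun m' hm' => ?_⟩
  · rw [smul_apply, weightedSum_apply hw, hwα, smul_eq_mul, inv_mul_eq_div]
  · ext f
    rw [smul_apply, weightedSum_apply hw, smul_eq_mul, hwα,
      ← hm'.tsum_mul_apply_eq hgnn hg1 hw (hypergroupTranslate_comm hgJ) hinv f, hwα,
      inv_mul_cancel_left₀ hc0]

theorem stmt5    (a b c : ℕ → ℝ)
    (ha : ∀ n : ℕ, 0 < a n) (hc : ∀ n : ℕ, 1 ≤ n → 0 < c n)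
    (p : ℕ → ℝ → ℝ)
    (hp0 : ∀ y : ℝ, p 0 y = 1)
    (hp1 : ∀ y : ℝ, p 1 y = (y - b 0) / a 0)
    (hrec : ∀ n : ℕ, 1 ≤ n → ∀ y : ℝ,
      p 1 y * p n y = a n * p (n + 1) y + b n * p n y + c n * p (n - 1) y)
    (hnorm : ∀ n : ℕ, p n 1 = 1)
    (g : ℕ → ℕ → ℕ → ℝ)
    (hg : ∀ n k : ℕ, ∀ y : ℝ,
      p n y * p k y = ∑ j ∈ Finset.range (n + k + 1), g n k j * p j y)
    (hgnn : ∀ n k j : ℕ, 0 ≤ g n k j)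
    (μ : Measure ℝ) [IsProbabilityMeasure μ]
    (hcsupp : ∃ K : Set ℝ, IsCompact K ∧ μ Kᶜ = 0)
    (horth : ∀ n k : ℕ, n ≠ k → ∫ y, p n y * p k y ∂μ = 0)
    (h : ℕ → ℝ)
    (hh : ∀ n : ℕ, h n = (∫ y, (p n y) ^ 2 ∂μ)⁻¹)
    (x : ℝ) (αx : BoundedContinuousFunction ℕ ℝ)
    (hαx : ∀ n : ℕ, αx n = p n x)
    (hxsupp : x ∈ measSupport μ)
    (hxiso : 𝓝[{y : ℝ | BddAbove (Set.range fun n : ℕ => |p n y|)} \ {x}] x = ⊥)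
    (hsum : Summable fun n : ℕ => h n * |p n x|) :
    ∃ m : BoundedContinuousFunction ℕ ℝ →L[ℝ] ℝ,
      IsAlphaMean g αx m ∧
      (∀ f : BoundedContinuousFunction ℕ ℝ,
        m f = (∑' n : ℕ, h n * p n x * f n) / (∑' n : ℕ, h n * (p n x) ^ 2)) ∧
      ∀ m' : BoundedContinuousFunction ℕ ℝ →L[ℝ] ℝ,
        IsAlphaMean g αx m' → m' = m :=
  stmt5_general a b c ha hc p hp0 hp1 hrec hnorm g hg hgnn μ hcsupp horth h hh x αx hαx hsum
end
end

section
/- Every character α of the symmetric hypergroup with α ≠ 1 has finite support; in particular Σ_{n≥0} c_n·|α(n)| < ∞ and Σ_{n≥0} c_n·α(n)² < ∞ (every nontrivial character belongs to ℓ¹ and ℓ² with respect to the Haar weights c_n). -/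
open Filter Topology

noncomputable section

/-- `Tf` is the translate by `n` of `f` in the symmetric hypergroup on `ℕ₀`
with parameters `b`, `c`:  `(T_n f)(k) = f(max n k)` for `k ≠ n`,
`T_0 f = f`, and `(T_n f)(n) = Σ_{k<n} (c_k/c_n) f(k) + (1 - b_n) f(n)`
for `n ≥ 1`. -/
def IsSymTranslate (b c : ℕ → ℝ) (n : ℕ)
    (f Tf : BoundedContinuousFunction ℕ ℝ) : Prop :=
  (∀ k : ℕ, k ≠ n → Tf k = f (max n k)) ∧
  (n = 0 → Tf 0 = f 0) ∧
  (1 ≤ n → Tf n = (∑ k ∈ Finset.range n, (c k / c n) * f k) + (1 - b n) * f n)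

/-- A character of the symmetric hypergroup: a bounded function `α : ℕ → ℝ`,
not identically `0`, with `α(max n k) = α(n)α(k)` for `n ≠ k` and
`Σ_{k<n} (c_k/c_n) α(k) + (1 - b_n) α(n) = α(n)²` for `n ≥ 1`. -/
def IsSymCharacter (b c : ℕ → ℝ) (α : BoundedContinuousFunction ℕ ℝ) : Prop :=
  α ≠ 0 ∧
  (∀ n k : ℕ, n ≠ k → α (max n k) = α n * α k) ∧
  ∀ n : ℕ, 1 ≤ n →
    (∑ k ∈ Finset.range n, (c k / c n) * α k) + (1 - b n) * α n = (α n) ^ 2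

/-- `m` is an `α`-mean on `ℓ∞(ℕ₀)` for the symmetric hypergroup:
`m(α) = 1` and `m(T_n f) = α(n) m(f)` for all `n` and bounded `f`. -/
def IsSymMean (b c : ℕ → ℝ) (α : BoundedContinuousFunction ℕ ℝ)
    (m : BoundedContinuousFunction ℕ ℝ →L[ℝ] ℝ) : Prop :=
  m α = 1 ∧
    ∀ (n : ℕ) (f Tf : BoundedContinuousFunction ℕ ℝ),
      IsSymTranslate b c n f Tf → m Tf = α n * m f


theorem eq_zero_of_lt_of_map_max_eq_mul {α : ℕ → ℝ}
    (hmul : ∀ n k : ℕ, n ≠ k → α (max n k) = α n * α k) {N m : ℕ}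
    (hN : α N ≠ 1) (hm : N < m) : α m = 0 := by
  have h : α m = α N * α m := by simpa [max_eq_right hm.le] using hmul N m hm.ne
  have h' : (1 - α N) * α m = 0 := by linear_combination h
  exact (mul_eq_zero.mp h').resolve_left (sub_ne_zero.mpr hN.symm)

theorem support_subset_Iic_of_map_max_eq_mul {α : ℕ → ℝ}
    (hmul : ∀ n k : ℕ, n ≠ k → α (max n k) = α n * α k) {N : ℕ}
    (hN : α N ≠ 1) : Function.support α ⊆ Set.Iic N := fun _ hm =>
  not_lt.mp fun hlt => hm (eq_zero_of_lt_of_map_max_eq_mul hmul hN hlt)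

theorem IsSymCharacter.support_finite {b c : ℕ → ℝ} {α : BoundedContinuousFunction ℕ ℝ}
    (hα : IsSymCharacter b c α) (hne : α ≠ 1) :
    (Function.support fun n : ℕ => α n).Finite := by
  obtain ⟨N, hN⟩ := DFunLike.ne_iff.mp hne
  exact (Set.finite_Iic N).subset (support_subset_Iic_of_map_max_eq_mul hα.2.1 hN)

theorem stmt15_general    (b c : ℕ → ℝ)
    (α : BoundedContinuousFunction ℕ ℝ)
    (hα : IsSymCharacter b c α)
    (hne : α ≠ 1) :
    (Function.support fun n : ℕ => α n).Finite ∧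
      Summable (fun n : ℕ => c n * |α n|) ∧
      Summable (fun n : ℕ => c n * (α n) ^ 2) := by
  have hfin := hα.support_finite hne
  refine ⟨hfin, ?_, ?_⟩ <;>
    exact summable_of_hasFiniteSupport (hfin.subset fun n hn h => hn (by simp [h]))

theorem stmt15    (b c : ℕ → ℝ)
    (hb : ∀ n : ℕ, 1 ≤ n → b n ∈ Set.Ioc (0 : ℝ) 1)
    (hc0 : c 0 = 1)
    (hcrec : ∀ n : ℕ, 1 ≤ n → c n = (1 / b n) * ∑ k ∈ Finset.range n, c k)
    (α : BoundedContinuousFunction ℕ ℝ)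
    (hα : IsSymCharacter b c α)
    (hne : α ≠ 1) :
    (Function.support fun n : ℕ => α n).Finite ∧
      Summable (fun n : ℕ => c n * |α n|) ∧
      Summable (fun n : ℕ => c n * (α n) ^ 2) :=
  stmt15_general b c α hα hne
end
end
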